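/- arXiv:1106.1666 — 3 statements merged into one kernel-verified Lean document; each statement's English description precedes it below -/
import Mathlib

section
/- Let f be a form of degree 2d in ℝ[X_1,...,X_n] with Δ defined as the set of exponents α ≠ 2d·e_i with f_α X^α not a square. If min_{1≤i≤n} f_{2d,i} ≥ (1/2d)·Σ_{α∈Δ} |f_α|·(α^α)^{1/(2d)}, then f is a sum of squares. -/
/-!
For every exponent `α ∈ Δ` of degree `2d` the binomial
`(|f_α| Λ_α / 2d) Σᵢ Xᵢ^{2d} + f_α X^α`, with `Λ_α = (α^α)^{1/2d}`, is a sum of squares: after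
the substitution `Xᵢ ↦ tᵢ Xᵢ` with `tᵢ^{2d} = Λ_α / αᵢ` it dominates `(|f_α|/2d)` times
`Σ αᵢ Xᵢ^{2d} ± 2d X^α`. Splitting the `2d` factors of `X^α` into two halves `P` and `Q` of
degree `d` gives `Σ αᵢ Xᵢ^{2d} ± 2d PQ = (AM-GM gap of P²) + (AM-GM gap of Q²) + d (P ± Q)²`,
and Hurwitz's identity shows that AM-GM gaps `Σ uᵢ^m - m Π uᵢ` in squares `uᵢ = xᵢ²` are sums of
squares. Subtracting these binomials for all `α ∈ Δ` leaves the diagonal coefficients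
nonnegative by hypothesis, and every other remaining term is an even monomial with a nonnegative
coefficient.
-/

open MvPolynomial Finset

theorem IsSumSq.smul {S R : Type*} [CommSemiring S] [CommSemiring R] [Algebra S R] {r : S}
    {s : R} (hr : IsSumSq r) (hs : IsSumSq s) : IsSumSq (r • s) := by
  rw [Algebra.smul_def]
  refine IsSumSq.mul ?_ hs
  induction hr with
  | zero => simp
  | sq_add a _ ih => simpa using (IsSumSq.mul_self (algebraMap S R a)).add ih

theorem Real.isSumSq_of_nonneg {r : ℝ} (hr : 0 ≤ r) : IsSumSq r :=
  Real.mul_self_sqrt hr ▸ IsSumSq.mul_self _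

section CommRing

variable {R ι : Type*} [CommRing R]

theorem isSumSq_sq_sub_sq_mul_pow_sub_pow (a b : R) (m : ℕ) :
    IsSumSq ((a ^ 2 - b ^ 2) * ((a ^ 2) ^ m - (b ^ 2) ^ m)) := by
  rw [← geom_sum₂_mul (a ^ 2) (b ^ 2) m, mul_left_comm, mul_comm]
  refine IsSumSq.mul (IsSumSq.mul_self _) (IsSumSq.sum fun i _ => ?_)
  rw [← pow_mul, ← pow_mul, mul_comm 2, mul_comm 2, pow_mul, pow_mul, ← mul_pow]
  exact (IsSquare.sq _).isSumSq

/-- Hurwitz's identity (1891): when the `uᵢ` are squares it exhibits the AM-GM gap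
`Σ uᵢ^(k+1) - (k+1) Π uᵢ` recursively as a sum of squares. -/
theorem hurwitz_identity [DecidableEq ι] (T : Finset ι) (u : ι → R) {k : ℕ} (hT : #T = k + 1) :
    (2 * k : R) * (∑ i ∈ T, u i ^ (k + 1) - (k + 1) * ∏ i ∈ T, u i) =
      2 * ∑ i ∈ T, u i * (∑ j ∈ T.erase i, u j ^ k - k * ∏ j ∈ T.erase i, u j) +
        ∑ i ∈ T, ∑ j ∈ T, (u i - u j) * (u i ^ k - u j ^ k) := by
  have h1 : ∀ i ∈ T, u i * (∑ j ∈ T.erase i, u j ^ k - k * ∏ j ∈ T.erase i, u j) =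
      u i * ∑ j ∈ T, u j ^ k - u i ^ (k + 1) - k * ∏ j ∈ T, u j := by
    intro i hi
    rw [sum_erase_eq_sub hi, ← mul_prod_erase T u hi]
    ring
  have h2 : ∀ i ∈ T, ∀ j ∈ T, (u i - u j) * (u i ^ k - u j ^ k) =
      u i ^ (k + 1) + u j ^ (k + 1) - u i * u j ^ k - u i ^ k * u j := by
    intros; ring
  rw [sum_congr rfl h1, sum_congr rfl fun i hi => sum_congr rfl (h2 i hi)]
  simp only [sum_sub_distrib, sum_add_distrib, ← mul_sum, ← sum_mul, sum_const, hT, nsmul_eq_mul]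
  push_cast
  ring

end CommRing

section RealAlgebra

variable {R ι : Type*} [CommRing R] [Algebra ℝ R]

theorem isSumSq_sum_sq_pow_card_sub_card_mul_prod [DecidableEq ι] (T : Finset ι) (x : ι → R) :
    IsSumSq (∑ i ∈ T, (x i ^ 2) ^ #T - #T * ∏ i ∈ T, x i ^ 2) := by
  induction hT : #T generalizing T with
  | zero => simp [card_eq_zero.mp hT]
  | succ k ih =>
    rcases k with _ | m
    · obtain ⟨a, rfl⟩ := card_eq_one.mp hT
      simp
    have hc : (2 * (m + 1) : ℝ) ≠ 0 := by positivity
    have hid := hurwitz_identity T (fun i => x i ^ 2) hT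
    push_cast at hid ⊢
    rw [← inv_smul_smul₀ hc (_ - _), Algebra.smul_def (2 * (m + 1) : ℝ)]
    simp only [map_mul, map_ofNat, map_add, map_natCast, map_one, hid]
    refine (Real.isSumSq_of_nonneg (by positivity)).smul (.add ?_ ?_)
    · refine .mul (by simpa using IsSumSq.natCast (R := R) 2) (IsSumSq.sum fun i hi => ?_)
      have := ih (T.erase i) (by rw [card_erase_of_mem hi, hT]; rfl)
      push_cast at this
      exact (IsSquare.sq _).isSumSq.mul this
    · exact IsSumSq.sum fun i _ => IsSumSq.sum fun j _ => isSumSq_sq_sub_sq_mul_pow_sub_pow _ _ _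

theorem isSumSq_sum_pow_add_smul_prod [DecidableEq ι] {d : ℕ} (T : Finset ι) (hT : #T = 2 * d)
    (x : ι → R) {ε : ℝ} (hε : ε ^ 2 = 1) :
    IsSumSq (∑ i ∈ T, x i ^ (2 * d) + (2 * d * ε) • ∏ i ∈ T, x i) := by
  obtain ⟨S, hST, hS⟩ := exists_subset_card_eq (show d ≤ #T by omega)
  have hS' : #(T \ S) = d := by rw [card_sdiff_of_subset hST]; omega
  have amgm := (isSumSq_sum_sq_pow_card_sub_card_mul_prod S x).add
    (isSumSq_sum_sq_pow_card_sub_card_mul_prod (T \ S) x)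
  have sq := (IsSumSq.natCast d).mul (IsSquare.sq (∏ i ∈ S, x i + ε • ∏ i ∈ T \ S, x i)).isSumSq
  rw [hS, hS'] at amgm
  simp only [← pow_mul, prod_pow] at amgm
  have split : ∑ i ∈ T, x i ^ (2 * d) + (2 * d * ε) • ∏ i ∈ T, x i =
      ∑ i ∈ S, x i ^ (2 * d) - d * (∏ i ∈ S, x i) ^ 2 +
        (∑ i ∈ T \ S, x i ^ (2 * d) - d * (∏ i ∈ T \ S, x i) ^ 2) +
        d * (∏ i ∈ S, x i + ε • ∏ i ∈ T \ S, x i) ^ 2 := by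
    have hε' : algebraMap ℝ R ε ^ 2 = 1 := by rw [← map_pow, hε, map_one]
    simp only [← sum_sdiff hST, ← prod_sdiff hST, Algebra.smul_def, map_mul, map_natCast,
      map_ofNat]
    linear_combination (-d * (∏ i ∈ T \ S, x i) ^ 2) * hε'
  exact split ▸ amgm.add sq

theorem isSumSq_sum_nsmul_pow_add_smul_prod_pow [Fintype ι] {d : ℕ} (a : ι → ℕ)
    (ha : ∑ i, a i = 2 * d) (x : ι → R) {ε : ℝ} (hε : ε ^ 2 = 1) :
    IsSumSq (∑ i, a i • x i ^ (2 * d) + (2 * d * ε) • ∏ i, x i ^ a i) := by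
  classical
  have := isSumSq_sum_pow_add_smul_prod (d := d) (univ : Finset (Σ i, Fin (a i)))
    (by simp [ha]) (fun p => x p.1) hε
  simpa [Fintype.sum_sigma, Fintype.prod_sigma] using this

end RealAlgebra

theorem exists_mul_pow_le_and_prod_pow_eq_one {ι : Type*} [Fintype ι] {d : ℕ} (hd : d ≠ 0)
    (a : ι → ℕ) (ha : ∑ i, a i = 2 * d) :
    ∃ t : ι → ℝ, (∀ i, a i * t i ^ (2 * d) ≤ (∏ j, (a j : ℝ) ^ a j) ^ (1 / (2 * d : ℝ))) ∧
      ∏ i, t i ^ a i = 1 := by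
  set Λ := (∏ j, (a j : ℝ) ^ a j) ^ (1 / (2 * d : ℝ))
  have h2d : 2 * d ≠ 0 := by omega
  have hprod : 0 < ∏ j, (a j : ℝ) ^ a j := prod_pos fun j _ => by
    rcases (a j).eq_zero_or_pos with h | h
    · simp [h]
    · positivity
  have hroot {y : ℝ} (hy : 0 ≤ y) : (y ^ (1 / (2 * d : ℝ))) ^ (2 * d) = y := by
    simpa [one_div] using Real.rpow_inv_natCast_pow hy h2d
  have hΛ : Λ ^ (2 * d) = ∏ j, (a j : ℝ) ^ a j := hroot hprod.le
  have hΛ0 : 0 ≤ Λ := by positivity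
  set t : ι → ℝ := fun i => (Λ / a i) ^ (1 / (2 * d : ℝ))
  have ht (i : ι) : t i ^ (2 * d) = Λ / a i := hroot (by positivity)
  refine ⟨t, fun i => ?_, ?_⟩
  · rw [ht]
    rcases (a i).eq_zero_or_pos with h | h
    · simp [h, hΛ0]
    · rw [mul_div_cancel₀ _ (by positivity)]
  · have ht0 : ∀ i, 0 ≤ t i := fun i => by positivity
    refine (pow_eq_one_iff_of_nonneg (prod_nonneg fun i _ => pow_nonneg (ht0 i) _) h2d).mp ?_
    simp_rw [← prod_pow, ← pow_mul, mul_comm (a _) (2 * d), pow_mul (t _) (2 * d), ht, div_pow,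
      prod_div_distrib, prod_pow_eq_pow_sum, ha, hΛ]
    exact div_self hprod.ne'

theorem isSumSq_sum_smul_pow_add_smul_prod_pow {R ι : Type*} [CommRing R] [Algebra ℝ R]
    [Fintype ι] {d : ℕ} (hd : d ≠ 0) (a : ι → ℕ) (ha : ∑ i, a i = 2 * d) (e : ℝ) (x : ι → R) :
    IsSumSq (∑ i, (|e| * (∏ j, (a j : ℝ) ^ a j) ^ (1 / (2 * d : ℝ)) / (2 * d)) • x i ^ (2 * d) +
      e • ∏ i, x i ^ a i) := by
  set Λ := (∏ j, (a j : ℝ) ^ a j) ^ (1 / (2 * d : ℝ))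
  obtain ⟨t, htΛ, ht⟩ := exists_mul_pow_le_and_prod_pow_eq_one hd a ha
  obtain ⟨ε, hε, heε⟩ : ∃ ε : ℝ, ε ^ 2 = 1 ∧ |e| * ε = e := by
    rcases le_or_gt 0 e with h | h
    · exact ⟨1, by norm_num, by rw [abs_of_nonneg h, mul_one]⟩
    · exact ⟨-1, by norm_num, by rw [abs_of_neg h, mul_neg_one, neg_neg]⟩
  set c := |e| / (2 * d) with hc_def
  have hc : 0 ≤ c := by positivity
  have hamgm := (Real.isSumSq_of_nonneg hc).smul
    (isSumSq_sum_nsmul_pow_add_smul_prod_pow a ha (fun i => t i • x i) hε)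
  have hslack : IsSumSq (∑ i, (c * (Λ - a i * t i ^ (2 * d))) • x i ^ (2 * d)) :=
    IsSumSq.sum fun i _ => (Real.isSumSq_of_nonneg (mul_nonneg hc (sub_nonneg.mpr (htΛ i)))).smul
      (by rw [pow_mul']; exact (IsSquare.sq _).isSumSq)
  have hprod : ∏ i, (t i • x i) ^ a i = ∏ i, x i ^ a i := by
    simp_rw [smul_pow, prod_smul, ht, one_smul]
  have split : ∑ i, (|e| * Λ / (2 * d)) • x i ^ (2 * d) + e • ∏ i, x i ^ a i =
      c • (∑ i, a i • (t i • x i) ^ (2 * d) + (2 * d * ε) • ∏ i, (t i • x i) ^ a i) +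
        ∑ i, (c * (Λ - a i * t i ^ (2 * d))) • x i ^ (2 * d) := by
    rw [hprod, smul_add, smul_smul, smul_sum, add_right_comm, ← sum_add_distrib]
    congr 1
    · refine sum_congr rfl fun i _ => ?_
      rw [smul_pow, ← Nat.cast_smul_eq_nsmul ℝ, smul_smul, smul_smul, ← add_smul, hc_def]
      ring_nf
    · congr 1
      rw [hc_def]
      field_simp
      exact heε.symm
  exact split ▸ hamgm.add hslack

namespace MvPolynomial

variable {σ R : Type*}

theorem isSumSq_monomial [CommSemiring R] {α : σ →₀ ℕ} (hα : ∀ i, Even (α i)) {c : R}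
    (hc : IsSumSq c) : IsSumSq (monomial α c) := by
  obtain ⟨β, rfl⟩ : ∃ β, α = β + β :=
    ⟨α.mapRange (· / 2) (Nat.zero_div 2), Finsupp.ext fun i => by
      obtain ⟨k, hk⟩ := hα i
      simp [hk]; omega⟩
  rw [← mul_one c, ← smul_eq_mul, ← smul_monomial, ← mul_one (1 : R), ← monomial_mul]
  exact hc.smul (IsSumSq.mul_self _)

theorem monomial_eq_smul_prod_X_pow [CommSemiring R] [Fintype σ] (α : σ →₀ ℕ) (c : R) :
    monomial α c = c • ∏ i, (X i : MvPolynomial σ R) ^ α i := by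
  rw [smul_eq_C_mul, monomial_eq, Finsupp.prod_fintype _ _ fun _ => pow_zero _]

variable [Fintype σ] [DecidableEq σ] {k : ℕ} {Δ : Finset (σ →₀ ℕ)}

theorem sum_monomial_add_sum_monomial_add_sum_monomial_single [CommSemiring R] (hk : k ≠ 0)
    (f : MvPolynomial σ R) (hΔ : Δ ⊆ f.support) (hΔk : ∀ i, Finsupp.single i k ∉ Δ) :
    ∑ α ∈ Δ, monomial α (coeff α f) +
        ∑ α ∈ (f.support \ Δ) \ univ.image fun i : σ => Finsupp.single i k,
          monomial α (coeff α f) +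
        ∑ i, monomial (Finsupp.single i k) (coeff (Finsupp.single i k) f) = f := by
  set D := univ.image fun i : σ => Finsupp.single i k
  have hD : ∑ α ∈ (f.support \ Δ) ∩ D, monomial α (coeff α f) =
      ∑ i, monomial (Finsupp.single i k) (coeff (Finsupp.single i k) f) := by
    rw [← sum_image (f := fun α => monomial α (coeff α f))
      fun i _ j _ h => Finsupp.single_left_injective hk h]
    refine sum_subset inter_subset_right fun α hαD hα => ?_
    obtain ⟨i, -, rfl⟩ := mem_image.mp hαD
    have : Finsupp.single i k ∉ f.support :=
      fun h => hα (mem_inter.mpr ⟨mem_sdiff.mpr ⟨h, hΔk i⟩, hαD⟩)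
    rw [notMem_support_iff.mp this, map_zero]
  rw [← hD, add_assoc, add_comm (∑ α ∈ _ \ D, _), sum_inter_add_sum_sdiff, add_comm,
    sum_sdiff hΔ, support_sum_monomial_coeff]

theorem eq_sum_add_sum_monomial_add_sum_monomial_single [CommRing R] (hk : k ≠ 0)
    (f : MvPolynomial σ R) (hΔ : Δ ⊆ f.support) (hΔk : ∀ i, Finsupp.single i k ∉ Δ)
    (ν : (σ →₀ ℕ) → R) :
    f = ∑ α ∈ Δ, (∑ i, ν α • X i ^ k + monomial α (coeff α f)) +
      ∑ α ∈ (f.support \ Δ) \ univ.image fun i : σ => Finsupp.single i k,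
        monomial α (coeff α f) +
      ∑ i, monomial (Finsupp.single i k) (coeff (Finsupp.single i k) f - ∑ α ∈ Δ, ν α) := by
  have hdiag (i : σ) : monomial (Finsupp.single i k) (coeff (Finsupp.single i k) f) =
      ∑ α ∈ Δ, ν α • X i ^ k +
        monomial (Finsupp.single i k) (coeff (Finsupp.single i k) f - ∑ α ∈ Δ, ν α) := by
    rw [← sum_smul, X_pow_eq_monomial, smul_monomial, smul_eq_mul, mul_one, ← map_add,
      add_sub_cancel]
  conv_lhs => rw [← sum_monomial_add_sum_monomial_add_sum_monomial_single hk f hΔ hΔk]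
  simp only [hdiag, sum_add_distrib]
  rw [sum_comm]
  abel

end MvPolynomial

/-- Fidalgo–Kovacec SOS criterion: for a form `f` of degree `2d`, if
`min_i f_{2d,i} ≥ (1/2d)·Σ_{α∈Δ} |f_α|·(α^α)^{1/(2d)}`, then `f` is a
sum of squares.  (Convention `0^0 = 1`.) -/
theorem fk_min_criterion_sos {n d : ℕ} (hd : 1 ≤ d) (f : MvPolynomial (Fin n) ℝ)
    (hf : f.IsHomogeneous (2 * d)) (Δ : Finset (Fin n →₀ ℕ))
    (hΔ : ∀ α, α ∈ Δ ↔ α ∈ f.support ∧ (¬ ∃ i, α = Finsupp.single i (2 * d)) ∧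
      (f.coeff α < 0 ∨ ∃ i, Odd (α i)))
    (hmin : ∀ i, (1 / ((2 * d : ℕ) : ℝ)) *
        ∑ α ∈ Δ, |f.coeff α| * (∏ j, ((α j : ℕ) : ℝ) ^ (α j)) ^ (1 / ((2 * d : ℕ) : ℝ))
      ≤ f.coeff (Finsupp.single i (2 * d))) :
    IsSumSq f := by
  classical
  have hd0 : d ≠ 0 := by omega
  have hΔf : Δ ⊆ f.support := fun α hα => ((hΔ α).mp hα).1
  have hΔk (i : Fin n) : Finsupp.single i (2 * d) ∉ Δ := fun hi => ((hΔ _).mp hi).2.1 ⟨i, rfl⟩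
  set ν : (Fin n →₀ ℕ) → ℝ :=
    fun α => |f.coeff α| * (∏ j, (α j : ℝ) ^ α j) ^ (1 / (2 * d : ℝ)) / (2 * d)
  have hν (i : Fin n) : ∑ α ∈ Δ, ν α ≤ f.coeff (Finsupp.single i (2 * d)) := by
    refine le_of_eq_of_le ?_ (by push_cast at hmin; exact hmin i)
    rw [mul_sum]
    exact sum_congr rfl fun α _ => by simp only [ν]; ring
  rw [eq_sum_add_sum_monomial_add_sum_monomial_single (by omega) f hΔf hΔk ν]
  refine .add (.add (.sum fun α hα => ?_) (.sum fun α hα => ?_)) (.sum fun i _ => ?_)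
  · have hα_deg : ∑ i, α i = 2 * d := by
      rw [← Finsupp.degree_eq_sum, Finsupp.degree_apply, hf.degree_eq_sum_deg_support (hΔf hα)]
    rw [monomial_eq_smul_prod_X_pow]
    exact isSumSq_sum_smul_pow_add_smul_prod_pow hd0 _ hα_deg _ _
  · simp only [mem_sdiff, mem_image, mem_univ, true_and] at hα
    obtain ⟨⟨hα_supp, hαΔ⟩, hα_diag⟩ := hα
    have hα_sq : 0 ≤ f.coeff α ∧ ∀ i, ¬Odd (α i) := by
      by_contra h
      exact hαΔ ((hΔ α).mpr ⟨hα_supp, fun ⟨i, hi⟩ => hα_diag ⟨i, hi.symm⟩, by grind⟩)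
    exact isSumSq_monomial (fun i => Nat.not_odd_iff_even.mp (hα_sq.2 i))
      (Real.isSumSq_of_nonneg hα_sq.1)
  · refine isSumSq_monomial (fun j => ?_) (Real.isSumSq_of_nonneg (sub_nonneg.mpr (hν i)))
    rw [Finsupp.single_apply]
    split_ifs <;> simp
end

section
/- Let f be a form of degree 2d and for each α ∈ Δ let n_α = |{i : α_i ≠ 0}|. If for every i = 1,...,n, f_{2d,i} ≥ Σ_{α∈Δ, α_i≠0} α_i·(|f_α|/(2d))^{2d/(α_i·n_α)}, then f is a sum of squares. -/
/-!
Each non-square term `f_α X^α` is absorbed by the diagonal: with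
`c_i = ±(|f_α| / 2d)^(1 / (α_i n_α))`, substituting `x_i = c_i X_i` into the AM–GM form
`A_α(x) = ∑ α_i x_i^(2d) - 2d ∏ x_i^(α_i)` gives `∑ λ_{α,i} X_i^(2d) + f_α X^α`, where the
`λ_{α,i}` are the summands of the hypothesis. The AM–GM form is a sum of squares
(Hurwitz, Reznick): the identity `2 A_{σ+τ} = A_{2σ} + A_{2τ} + 2d (x^σ - x^τ)^2` splits an
exponent vector into two of smaller support, down to two variables, where it bounds
`A_{(k, 2d-k)}` below by `½ A_{(2k mod 2d, …)}`; around a cycle of the doubling map this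
gives `A = c A + (sum of squares)` with `c < 1`. What is left of `f` once these sums of
squares are subtracted has nonnegative coefficients on even monomials only.
-/

open MvPolynomial Finset

namespace IsSumSq

variable {R : Type*} [CommRing R] [Algebra ℝ R] {p q r : R} {c c' : ℝ}

theorem smul_of_nonneg (hc : 0 ≤ c) (hp : IsSumSq p) : IsSumSq (c • p) := by
  rw [Algebra.smul_def, ← Real.mul_self_sqrt hc, map_mul]
  exact (IsSumSq.mul_self _).mul hp

theorem of_sub_smul (hc : 0 ≤ c) (h : IsSumSq (p - c • q)) (hq : IsSumSq q) : IsSumSq p := by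
  simpa using h.add (hq.smul_of_nonneg hc)

theorem sub_smul_trans (hc : 0 ≤ c) (h₁ : IsSumSq (p - c • q)) (h₂ : IsSumSq (q - c' • r)) :
    IsSumSq (p - (c * c') • r) := by
  have key : p - (c * c') • r = (p - c • q) + c • (q - c' • r) := by module
  exact key ▸ h₁.add (h₂.smul_of_nonneg hc)

theorem of_sub_smul_self (hc : c < 1) (h : IsSumSq (p - c • p)) : IsSumSq p := by
  convert h.smul_of_nonneg (inv_nonneg.2 (sub_nonneg.2 hc.le)) using 1
  have : (1 - c)⁻¹ * (1 - c) = 1 := inv_mul_cancel₀ (sub_ne_zero.2 hc.ne')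
  linear_combination (norm := module) (-this) • p

end IsSumSq

variable {ι : Type*} [Fintype ι]

section ExponentVectors

theorem exists_le_le_sum_eq {lo hi : ι → ℕ} (hle : lo ≤ hi) {m : ℕ} (hlo : ∑ i, lo i ≤ m)
    (hhi : m ≤ ∑ i, hi i) : ∃ b, lo ≤ b ∧ b ≤ hi ∧ ∑ i, b i = m := by
  classical
  induction m with
  | zero => exact ⟨lo, le_rfl, hle, by omega⟩
  | succ m ih =>
    rcases hlo.eq_or_lt with hlo | hlo
    · exact ⟨lo, le_rfl, hle, hlo⟩
    obtain ⟨b, hlob, hbhi, hb⟩ := ih (by omega) (by omega)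
    obtain ⟨i, hi⟩ : ∃ i, b i < hi i := by
      by_contra! h
      have := sum_le_sum fun i (_ : i ∈ univ) => h i
      omega
    refine ⟨b + Pi.single i 1, hlob.trans (by simp), fun l => ?_, ?_⟩
    · by_cases hl : l = i
      · subst hl; simpa using hi
      · simpa [hl] using hbhi l
    · simp [sum_add_distrib, hb]

theorem card_support_lt_of_le {a b : ι → ℕ} (hle : b ≤ a) {i : ι} (hai : a i ≠ 0)
    (hbi : b i = 0) : #{l | b l ≠ 0} < #{l | a l ≠ 0} := by
  refine card_lt_card <| (ssubset_iff_of_subset fun l hl => ?_).2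
    ⟨i, by simpa using hai, by simpa using hbi⟩
  simp only [mem_filter, mem_univ, true_and] at hl ⊢
  exact fun h => hl (Nat.eq_zero_of_le_zero (h ▸ hle l))

theorem exists_pair_le_half {a : ι → ℕ} {d : ℕ} (ha : ∑ l, a l = 2 * d)
    (h3 : 2 < #{l | a l ≠ 0}) : ∃ i j, i ≠ j ∧ a i ≠ 0 ∧ a j ≠ 0 ∧ a i ≤ d ∧ a j ≤ d := by
  classical
  obtain ⟨p, hp, q, hq, r, hr, hpq, hpr, hqr⟩ := two_lt_card.1 h3
  simp only [mem_filter, mem_univ, true_and] at hp hq hr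
  have pair_le : ∀ {s t : ι}, s ≠ t → a s + a t ≤ 2 * d := by
    intro s t hst
    rw [← ha, ← sum_pair hst]
    exact sum_le_sum_of_subset (subset_univ _)
  by_cases hpd : a p ≤ d
  · by_cases hqd : a q ≤ d
    · exact ⟨p, q, hpq, hp, hq, hpd, hqd⟩
    · exact ⟨p, r, hpr, hp, hr, hpd, by have := pair_le hqr; omega⟩
  · exact ⟨q, r, hqr, hq, hr, by have := pair_le hpq; omega, by have := pair_le hpr; omega⟩

theorem exists_add_eq_card_support_lt {a : ι → ℕ} {d : ℕ} (ha : ∑ l, a l = 2 * d)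
    (h3 : 2 < #{l | a l ≠ 0}) : ∃ σ τ : ι → ℕ, σ + τ = a ∧ ∑ l, σ l = d ∧ ∑ l, τ l = d ∧
      #{l | σ l ≠ 0} < #{l | a l ≠ 0} ∧ #{l | τ l ≠ 0} < #{l | a l ≠ 0} := by
  classical
  obtain ⟨i, j, hij, hi, hj, hid, hjd⟩ := exists_pair_le_half ha h3
  have hlo : Pi.single j (a j) ≤ Function.update a i 0 := fun l => by
    by_cases hl : l = j
    · subst hl; simp [hij.symm]
    · simp [hl]
  have hhi : d ≤ ∑ l, Function.update a i 0 l := by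
    have := add_sum_erase univ a (mem_univ i)
    rw [sum_update_of_mem (mem_univ i), ← sdiff_singleton_eq_erase] at *
    omega
  -- `σ` takes all of `a j` and nothing of `a i`, so `τ := a - σ` vanishes at `j`
  obtain ⟨σ, hjσ, hσi, hσ⟩ := exists_le_le_sum_eq hlo (by simpa using hjd) hhi
  have hσa : σ ≤ a := fun l => (hσi l).trans (by by_cases hl : l = i <;> simp [hl])
  have hστ : σ + (a - σ) = a := add_tsub_cancel_of_le hσa
  refine ⟨σ, a - σ, hστ, hσ, ?_, card_support_lt_of_le hσa hi (by simpa using hσi i),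
    card_support_lt_of_le tsub_le_self hj (by simpa [Nat.sub_eq_zero_iff_le] using hjσ j)⟩
  have := congrArg (fun b : ι → ℕ => ∑ l, b l) hστ
  simp only [Pi.add_apply, sum_add_distrib] at this
  omega

def doublingStep (d k : ℕ) : ℕ := if k ≤ d then 2 * k else 2 * k - 2 * d

theorem doublingStep_le {d k : ℕ} (hk : k ≤ 2 * d) : doublingStep d k ≤ 2 * d := by
  unfold doublingStep; split <;> omega

theorem iterate_doublingStep_le {d k : ℕ} (hk : k ≤ 2 * d) (m : ℕ) :
    (doublingStep d)^[m] k ≤ 2 * d := by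
  induction m with
  | zero => exact hk
  | succ m ih => rw [Function.iterate_succ_apply']; exact doublingStep_le ih

end ExponentVectors

section AMGMForm

variable {R : Type*} [CommRing R]

def amgmForm (d : ℕ) (a : ι → ℕ) (x : ι → R) : R :=
  ∑ i, (a i : R) * x i ^ (2 * d) - 2 * d * ∏ i, x i ^ a i

theorem two_mul_amgmForm_add (d : ℕ) (σ τ : ι → ℕ) (x : ι → R) :
    2 * amgmForm d (σ + τ) x = amgmForm d (2 • σ) x + amgmForm d (2 • τ) x
      + 2 * d * (∏ i, x i ^ σ i - ∏ i, x i ^ τ i) ^ 2 := by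
  simp only [amgmForm, Pi.add_apply, Pi.smul_apply, smul_eq_mul, pow_add, pow_mul',
    prod_mul_distrib, prod_pow, Nat.cast_add, Nat.cast_mul, Nat.cast_ofNat, add_mul, mul_assoc,
    sum_add_distrib, ← mul_sum]
  ring

theorem amgmForm_pi_single [DecidableEq ι] (d : ℕ) (i : ι) (x : ι → R) :
    amgmForm d (Pi.single i (2 * d)) x = 0 := by
  simp [amgmForm, Pi.single_apply]

variable [Algebra ℝ R] {d : ℕ} {x : ι → R}

theorem isSumSq_amgmForm_add_sub_half {σ τ : ι → ℕ} (hσ : IsSumSq (amgmForm d (2 • σ) x)) :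
    IsSumSq (amgmForm d (σ + τ) x - (1 / 2 : ℝ) • amgmForm d (2 • τ) x) := by
  have key : amgmForm d (σ + τ) x - (1 / 2 : ℝ) • amgmForm d (2 • τ) x =
      (1 / 2 : ℝ) • (amgmForm d (2 • σ) x
        + 2 * d * (∏ i, x i ^ σ i - ∏ i, x i ^ τ i) ^ 2) := by
    have half : algebraMap ℝ R (1 / 2) * 2 = 1 := by
      rw [← map_ofNat (algebraMap ℝ R) 2, ← map_mul]; norm_num
    have h := two_mul_amgmForm_add d σ τ x
    generalize amgmForm d (2 • σ) x = A, amgmForm d (2 • τ) x = B at h ⊢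
    simp only [Algebra.smul_def]
    linear_combination algebraMap ℝ R (1 / 2) * h - amgmForm d (σ + τ) x * half
  rw [key]
  have h2d : IsSumSq (2 * d : R) := by exact_mod_cast IsSumSq.natCast (R := R) (2 * d)
  exact (hσ.add (h2d.mul (IsSquare.sq _).isSumSq)).smul_of_nonneg (by norm_num)

theorem isSumSq_amgmForm_add {σ τ : ι → ℕ} (hσ : IsSumSq (amgmForm d (2 • σ) x))
    (hτ : IsSumSq (amgmForm d (2 • τ) x)) : IsSumSq (amgmForm d (σ + τ) x) :=
  (isSumSq_amgmForm_add_sub_half hσ).of_sub_smul (by norm_num) hτ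

section Binary

variable [DecidableEq ι]

theorem isSumSq_amgmForm_binary_sub_half (i j : ι) {k : ℕ} (hk : k ≤ 2 * d) :
    IsSumSq (amgmForm d (Pi.single i k + Pi.single j (2 * d - k)) x - (1 / 2 : ℝ) •
      amgmForm d (Pi.single i (doublingStep d k) + Pi.single j (2 * d - doublingStep d k)) x) := by
  obtain ⟨σ, τ, hστ, hσ, hτ⟩ : ∃ σ τ : ι → ℕ, Pi.single i k + Pi.single j (2 * d - k) = σ + τ ∧
      (2 • σ = Pi.single i (2 * d) ∨ 2 • σ = Pi.single j (2 * d)) ∧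
      Pi.single i (doublingStep d k) + Pi.single j (2 * d - doublingStep d k) = 2 • τ := by
    by_cases hkd : k ≤ d
    · refine ⟨Pi.single j d, Pi.single i k + Pi.single j (d - k), ?_, Or.inr ?_, ?_⟩ <;>
      · ext l
        simp only [doublingStep, hkd, if_true, Pi.add_apply, Pi.smul_apply, Pi.single_apply,
          smul_eq_mul]
        split_ifs <;> omega
    · refine ⟨Pi.single i d, Pi.single i (k - d) + Pi.single j (2 * d - k), ?_, Or.inl ?_, ?_⟩ <;>
      · ext l
        simp only [doublingStep, hkd, if_false, Pi.add_apply, Pi.smul_apply, Pi.single_apply,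
          smul_eq_mul]
        split_ifs <;> omega
  rw [hστ, hτ]
  refine isSumSq_amgmForm_add_sub_half ?_
  rcases hσ with hσ | hσ <;> simp [hσ, amgmForm_pi_single]

theorem isSumSq_amgmForm_binary_sub_iterate (i j : ι) {k : ℕ} (hk : k ≤ 2 * d) (m : ℕ) :
    IsSumSq (amgmForm d (Pi.single i k + Pi.single j (2 * d - k)) x - ((1 / 2 : ℝ) ^ m) •
      amgmForm d (Pi.single i ((doublingStep d)^[m] k)
        + Pi.single j (2 * d - (doublingStep d)^[m] k)) x) := by
  induction m with
  | zero => simp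
  | succ m ih =>
    rw [pow_succ, Function.iterate_succ_apply']
    exact ih.sub_smul_trans (by positivity)
      (isSumSq_amgmForm_binary_sub_half i j (iterate_doublingStep_le hk m))

theorem isSumSq_amgmForm_binary (i j : ι) {k : ℕ} (hk : k ≤ 2 * d) :
    IsSumSq (amgmForm d (Pi.single i k + Pi.single j (2 * d - k)) x) := by
  obtain ⟨m, m', hlt, hcycle⟩ := Set.finite_Iic (2 * d) |>.exists_lt_map_eq_of_forall_mem
    (f := fun m => (doublingStep d)^[m] k) (fun m => iterate_doublingStep_le hk m)
  have hself := isSumSq_amgmForm_binary_sub_iterate (x := x) i j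
    (iterate_doublingStep_le hk m) (m' - m)
  rw [← Function.iterate_add_apply, Nat.sub_add_cancel hlt.le, ← hcycle] at hself
  exact (isSumSq_amgmForm_binary_sub_iterate i j hk m).of_sub_smul (by positivity)
    (hself.of_sub_smul_self (pow_lt_one₀ (by norm_num) (by norm_num) (by omega)))

end Binary

theorem isSumSq_amgmForm_of_card_support_le_two {a : ι → ℕ} (ha : ∑ l, a l = 2 * d)
    (h2 : #{l | a l ≠ 0} ≤ 2) : IsSumSq (amgmForm d a x) := by
  classical
  set s : Finset ι := {l | a l ≠ 0} with hs_def
  have hs : ∀ l, a l ≠ 0 ↔ l ∈ s := by simp [s]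
  have hsum : ∑ l ∈ s, a l = 2 * d := by rw [hs_def, sum_filter_ne_zero, ha]
  clear_value s
  interval_cases hcard : #s
  · obtain rfl : a = 0 := funext fun l => by simpa [card_eq_zero.1 hcard] using hs l
    obtain rfl : d = 0 := by simp at ha; omega
    simp [amgmForm]
  · obtain ⟨i, rfl⟩ := card_eq_one.1 hcard
    obtain rfl : a = Pi.single i (2 * d) := funext fun l => by
      by_cases hl : l = i
      · subst hl; simpa using hsum
      · simpa [hl] using hs l
    simp [amgmForm_pi_single]
  · obtain ⟨i, j, hij, rfl⟩ := card_eq_two.1 hcard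
    rw [sum_pair hij] at hsum
    have ha_eq : a = Pi.single i (a i) + Pi.single j (2 * d - a i) := funext fun l => by
      by_cases hli : l = i
      · subst hli; simp [hij]
      by_cases hlj : l = j
      · subst hlj; simp [Ne.symm hij]; omega
      · simpa [hli, hlj] using hs l
    rw [ha_eq]
    exact isSumSq_amgmForm_binary i j (by omega)

theorem isSumSq_amgmForm {a : ι → ℕ} (ha : ∑ l, a l = 2 * d) : IsSumSq (amgmForm d a x) := by
  induction hN : #{l | a l ≠ 0} using Nat.strong_induction_on generalizing a with
  | _ N ih =>
  rcases le_or_gt N 2 with h2 | h3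
  · exact isSumSq_amgmForm_of_card_support_le_two ha (hN ▸ h2)
  obtain ⟨σ, τ, rfl, hσ, hτ, hσN, hτN⟩ := exists_add_eq_card_support_lt ha (hN ▸ h3)
  have double : ∀ b : ι → ℕ, ∑ l, b l = d → #{l | b l ≠ 0} < N →
      IsSumSq (amgmForm d (2 • b) x) := fun b hb hbN =>
    ih _ (by simpa [mul_ne_zero_iff] using hbN) (by simp [← mul_sum, hb]) rfl
  exact isSumSq_amgmForm_add (double σ hσ (hN ▸ hσN)) (double τ hτ (hN ▸ hτN))

end AMGMForm

section Scaling

theorem prod_rpow_pow_eq {α : ι → ℕ} (hα : α ≠ 0) {b : ℝ} (hb : 0 ≤ b) :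
    ∏ i, (b ^ (1 / ((α i : ℝ) * #{j | α j ≠ 0}))) ^ α i = b := by
  have hN : (#{j | α j ≠ 0} : ℝ) ≠ 0 := by
    obtain ⟨j, hj⟩ := Function.ne_iff.1 hα
    exact Nat.cast_ne_zero.2 (card_ne_zero_of_mem (by simpa using hj))
  calc ∏ i, (b ^ (1 / ((α i : ℝ) * #{j | α j ≠ 0}))) ^ α i
      = ∏ i ∈ {j | α j ≠ 0}, b ^ (1 / (#{j | α j ≠ 0} : ℝ)) := by
        rw [prod_filter]
        refine prod_congr rfl fun i _ => ?_
        split_ifs with h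
        · rw [← Real.rpow_natCast, ← Real.rpow_mul hb]
          congr 1
          field_simp
        · simp only [not_not] at h
          simp [h]
    _ = b := by
        rw [prod_const, ← Real.rpow_natCast, ← Real.rpow_mul hb, one_div_mul_cancel hN,
          Real.rpow_one]

theorem prod_update_neg_pow_of_odd [DecidableEq ι] (r : ι → ℝ) (α : ι → ℕ) {i₀ : ι}
    (hi₀ : Odd (α i₀)) :
    ∏ i, Function.update r i₀ (-r i₀) i ^ α i = -∏ i, r i ^ α i := by
  rw [← mul_prod_erase univ _ (mem_univ i₀),
    ← mul_prod_erase univ (fun i => r i ^ α i) (mem_univ i₀), Function.update_self,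
    hi₀.neg_pow, neg_mul]
  congr 2
  exact prod_congr rfl fun i hi => by rw [Function.update_of_ne (ne_of_mem_erase hi)]

noncomputable def amgmWeight (d : ℕ) (α : ι → ℕ) (t : ℝ) (i : ι) : ℝ :=
  (α i : ℝ) * (|t| / ((2 * d : ℕ) : ℝ)) ^ (((2 * d : ℕ) : ℝ) / ((α i : ℝ) * #{j | α j ≠ 0}))

theorem exists_scaling_amgmWeight {d : ℕ} (hd : 0 < d) {α : ι → ℕ} (hα : ∑ i, α i = 2 * d)
    {t : ℝ} (hsign : t < 0 ∨ ∃ i, Odd (α i)) : ∃ c : ι → ℝ,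
      (∀ i, α i * c i ^ (2 * d) = amgmWeight d α t i) ∧ -(2 * d * ∏ i, c i ^ α i) = t := by
  classical
  set b := |t| / ((2 * d : ℕ) : ℝ) with hb_def
  have hb : 0 ≤ b := by positivity
  have h2db : 2 * d * b = |t| := by rw [hb_def]; push_cast; field_simp
  set r : ι → ℝ := fun i => b ^ (1 / ((α i : ℝ) * #{j | α j ≠ 0}))
  have hr : ∀ i, α i * r i ^ (2 * d) = amgmWeight d α t i := fun i => by
    rw [amgmWeight, ← Real.rpow_natCast, ← Real.rpow_mul hb, one_div_mul_eq_div]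
  have hα0 : α ≠ 0 := fun h => by simp [h] at hα; omega
  have hprod : ∏ i, r i ^ α i = b := prod_rpow_pow_eq hα0 hb
  rcases lt_or_ge t 0 with ht | ht
  · exact ⟨r, hr, by rw [hprod, h2db, abs_of_neg ht, neg_neg]⟩
  obtain ⟨i₀, hi₀⟩ := hsign.resolve_left (not_lt.2 ht)
  refine ⟨Function.update r i₀ (-r i₀), fun i => ?_, ?_⟩
  · by_cases hi : i = i₀
    · subst hi; rw [Function.update_self, (even_two_mul d).neg_pow, hr]
    · rw [Function.update_of_ne hi, hr]
  · rw [prod_update_neg_pow_of_odd r α hi₀, hprod, mul_neg, neg_neg, h2db, abs_of_nonneg ht]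

theorem amgmForm_C_mul_X {R : Type*} [CommRing R] (d : ℕ) (α : ι →₀ ℕ) (c : ι → R) :
    amgmForm d α (fun i => C (c i) * X i) =
      ∑ i, monomial (Finsupp.single i (2 * d)) (α i * c i ^ (2 * d))
        + monomial α (-(2 * d * ∏ i, c i ^ α i)) := by
  rw [monomial_eq, Finsupp.prod_fintype _ _ fun i => pow_zero (X i : MvPolynomial ι R)]
  simp only [amgmForm, ← C_mul_X_pow_eq_monomial, mul_pow, prod_mul_distrib, map_pow, map_prod,
    map_neg, map_mul, map_natCast, map_ofNat, ← mul_assoc]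
  ring

theorem isSumSq_sum_monomial_amgmWeight_add {d : ℕ} (hd : 0 < d) {α : ι →₀ ℕ}
    (hα : ∑ i, α i = 2 * d) {t : ℝ} (hsign : t < 0 ∨ ∃ i, Odd (α i)) :
    IsSumSq (∑ i, monomial (Finsupp.single i (2 * d)) (amgmWeight d α t i) + monomial α t) := by
  obtain ⟨c, hc, ht⟩ := exists_scaling_amgmWeight hd hα hsign
  have := isSumSq_amgmForm (x := fun i => C (c i) * X i) hα
  simpa only [amgmForm_C_mul_X, hc, ht] using this

end Scaling

section Remainder

theorem isSumSq_monomial {σ : Type*} {β : σ →₀ ℕ} {t : ℝ} (ht : 0 ≤ t)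
    (hβ : ∀ i, Even (β i)) : IsSumSq (monomial β t) := by
  set γ := β.mapRange (· / 2) (Nat.zero_div 2)
  have hγ : γ + γ = β := Finsupp.ext fun i => by
    obtain ⟨r, hr⟩ := hβ i
    simp [γ, hr]
    omega
  rw [← hγ, ← Real.mul_self_sqrt ht, ← monomial_mul]
  exact .mul_self _

theorem isSumSq_of_forall_mem_support {σ : Type*} {p : MvPolynomial σ ℝ}
    (h : ∀ β ∈ p.support, 0 ≤ p.coeff β ∧ ∀ i, Even (β i)) : IsSumSq p := by
  rw [← p.support_sum_monomial_coeff]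
  exact IsSumSq.sum fun β hβ => isSumSq_monomial (h β hβ).1 (h β hβ).2

variable [DecidableEq ι]

theorem coeff_single_sum_monomial_single {m : ℕ} (hm : m ≠ 0) (w : ι → ℝ) (i : ι) :
    coeff (Finsupp.single i m) (∑ j, monomial (Finsupp.single j m) (w j)) = w i := by
  simp [coeff_sum, coeff_monomial, Finsupp.single_left_inj hm]

theorem coeff_sum_monomial_single_of_ne {m : ℕ} (w : ι → ℝ) {β : ι →₀ ℕ}
    (hβ : ∀ i, β ≠ Finsupp.single i m) :
    coeff β (∑ j, monomial (Finsupp.single j m) (w j)) = 0 := by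
  simp [coeff_sum, coeff_monomial, fun j => (hβ j).symm]

theorem isSumSq_sub_sum_diag_add_monomial {d : ℕ} (hd : d ≠ 0) (f : MvPolynomial ι ℝ)
    (Δ : Finset (ι →₀ ℕ)) (w : (ι →₀ ℕ) → ι → ℝ)
    (hΔ : ∀ α, α ∈ Δ ↔ α ∈ f.support ∧ (¬ ∃ i, α = Finsupp.single i (2 * d)) ∧
      (f.coeff α < 0 ∨ ∃ i, Odd (α i)))
    (hw : ∀ i, ∑ α ∈ Δ, w α i ≤ f.coeff (Finsupp.single i (2 * d))) :
    IsSumSq (f - ∑ α ∈ Δ,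
      (∑ i, monomial (Finsupp.single i (2 * d)) (w α i) + monomial α (f.coeff α))) := by
  refine isSumSq_of_forall_mem_support fun β hβ => ?_
  rw [mem_support_iff] at hβ
  rw [coeff_sub, coeff_sum] at hβ ⊢
  simp only [coeff_add, coeff_monomial] at hβ ⊢
  by_cases hdiag : ∃ i, β = Finsupp.single i (2 * d)
  · obtain ⟨i, rfl⟩ := hdiag
    have hnotΔ : ∀ α ∈ Δ, α ≠ Finsupp.single i (2 * d) := fun α hα h =>
      ((hΔ α).1 hα).2.1 ⟨i, h⟩
    simp only [coeff_single_sum_monomial_single (by omega : 2 * d ≠ 0)]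
    rw [sum_congr rfl fun α hα => by rw [if_neg (hnotΔ α hα), add_zero]]
    refine ⟨sub_nonneg.2 (hw i), fun j => ?_⟩
    rw [Finsupp.single_apply]
    split_ifs <;> simp
  · push Not at hdiag
    simp only [coeff_sum_monomial_single_of_ne _ hdiag, zero_add, sum_ite_eq'] at hβ ⊢
    have hβΔ : β ∉ Δ := fun h => hβ (by simp [h])
    simp only [hβΔ, if_false, sub_zero] at hβ ⊢
    have hsign : ¬(f.coeff β < 0 ∨ ∃ i, Odd (β i)) := fun h =>
      hβΔ ((hΔ β).2 ⟨mem_support_iff.2 hβ, fun ⟨i, hi⟩ => hdiag i hi, h⟩)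
    push Not at hsign
    exact ⟨hsign.1, fun i => Nat.not_odd_iff_even.1 (hsign.2 i)⟩

end Remainder

/-- SOS criterion (Corollary 2.6): for a form `f` of degree `2d`, with
`n_α = |{i : α_i ≠ 0}|`, if for every `i`
`f_{2d,i} ≥ Σ_{α∈Δ, α_i≠0} α_i·(|f_α|/(2d))^{2d/(α_i·n_α)}`,
then `f` is a sum of squares. -/
theorem newcrt_sos {n d : ℕ} (hd : 1 ≤ d) (f : MvPolynomial (Fin n) ℝ)
    (hf : f.IsHomogeneous (2 * d)) (Δ : Finset (Fin n →₀ ℕ))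
    (hΔ : ∀ α, α ∈ Δ ↔ α ∈ f.support ∧ (¬ ∃ i, α = Finsupp.single i (2 * d)) ∧
      (f.coeff α < 0 ∨ ∃ i, Odd (α i)))
    (h : ∀ i, ∑ α ∈ Δ with α i ≠ 0,
        ((α i : ℕ) : ℝ) * (|f.coeff α| / ((2 * d : ℕ) : ℝ)) ^
          (((2 * d : ℕ) : ℝ) /
            (((α i : ℕ) : ℝ) * ((Finset.univ.filter (fun j => α j ≠ 0)).card : ℝ)))
      ≤ f.coeff (Finsupp.single i (2 * d))) :
    IsSumSq f := by
  have hdeg : ∀ α ∈ Δ, ∑ i, α i = 2 * d := fun α hα => by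
    rw [← Finsupp.degree_eq_sum, Finsupp.degree_apply,
      ← hf.degree_eq_sum_deg_support ((hΔ α).1 hα).1]
  have hdiag : ∀ α ∈ Δ, IsSumSq (∑ i, monomial (Finsupp.single i (2 * d))
      (amgmWeight d α (f.coeff α) i) + monomial α (f.coeff α)) := fun α hα =>
    isSumSq_sum_monomial_amgmWeight_add hd (hdeg α hα) ((hΔ α).1 hα).2.2
  have hw : ∀ i, ∑ α ∈ Δ, amgmWeight d α (f.coeff α) i ≤ f.coeff (Finsupp.single i (2 * d)) :=
    fun i => by
      rw [← sum_filter_of_ne (p := fun α : Fin n →₀ ℕ => α i ≠ 0)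
        fun α _ hα hαi => hα (by simp [amgmWeight, hαi])]
      exact h i
  have hrest := isSumSq_sub_sum_diag_add_monomial (by omega) f Δ _ hΔ hw
  simpa using (IsSumSq.sum hdiag).add hrest
end

section
/- For f(X,Y) = X^4 + Y^4 − X^2Y^2 + X + Y, the global minimum of f on ℝ^2 equals −3/2^{4/3}, and f − (−3/2^{4/3}) is a sum of squares; in particular f_* = f_sos = −3·2^{−4/3}. -/
open MvPolynomial

/-!
Write `s = 2^{1/3}`, so that `3 / 2^{4/3} = 3 s² / 4`. Then `f + 3 s² / 4` is the explicit
nonnegative combination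
`3/4 (X² - Y²)² + 1/8 (2XY - s)² + 1/16 (2X² - s)² + 1/16 (2Y² - s)² + s/4 (X + Y + s²)²`,
an identity modulo `s³ = 2`. Hence `f ≥ -3 s² / 4` everywhere, and equality holds at
`X = Y = -s²/2 = -2^{-1/3}`, where every one of these squares vanishes.
-/

theorem IsSumSq.map {R S F : Type*} [NonUnitalNonAssocSemiring R] [NonUnitalNonAssocSemiring S]
    [FunLike F R S] [NonUnitalRingHomClass F R S] (f : F) {s : R} (hs : IsSumSq s) :
    IsSumSq (f s) := by
  induction hs with
  | zero => simp
  | sq_add a _ ih => simpa using ih.sq_add (f a)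

theorem isSumSq_algebraMap_of_nonneg {A : Type*} [Semiring A] [Algebra ℝ A] {c : ℝ}
    (hc : 0 ≤ c) : IsSumSq (algebraMap ℝ A c) :=
  (IsSquare.isSumSq ⟨√c, (Real.mul_self_sqrt hc).symm⟩).map (algebraMap ℝ A)

theorem two_rpow_one_third_pow_three : ((2 : ℝ) ^ ((1 : ℝ) / 3)) ^ 3 = 2 := by
  rw [← Real.rpow_natCast, ← Real.rpow_mul zero_le_two]; norm_num

theorem three_div_two_rpow_four_thirds :
    3 / (2 : ℝ) ^ ((4 : ℝ) / 3) = 3 * ((2 : ℝ) ^ ((1 : ℝ) / 3)) ^ 2 / 4 := by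
  have h : (2 : ℝ) ^ ((4 : ℝ) / 3) = 2 * (2 : ℝ) ^ ((1 : ℝ) / 3) := by
    rw [← Real.rpow_one_add' zero_le_two (by norm_num)]; norm_num
  rw [h, div_eq_div_iff (by positivity) four_ne_zero]
  linear_combination (-6 : ℝ) * two_rpow_one_third_pow_three

noncomputable def quarticExample : MvPolynomial (Fin 2) ℝ :=
  X 0 ^ 4 + X 1 ^ 4 - X 0 ^ 2 * X 1 ^ 2 + X 0 + X 1

theorem quarticExample_sub_eq_sum_sq {s : ℝ} (hs : s ^ 3 = 2) :
    quarticExample - C (-(3 * s ^ 2 / 4)) =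
      C (3 / 4) * (X 0 ^ 2 - X 1 ^ 2) ^ 2 + C (1 / 8) * (2 * X 0 * X 1 - C s) ^ 2 +
        C (1 / 16) * (2 * X 0 ^ 2 - C s) ^ 2 + C (1 / 16) * (2 * X 1 ^ 2 - C s) ^ 2 +
        C (s / 4) * (X 0 + X 1 + C s ^ 2) ^ 2 := by
  refine MvPolynomial.funext fun x => ?_
  simp only [quarticExample, map_add, map_sub, map_mul, map_pow, map_ofNat, eval_X, eval_C]
  linear_combination (-(x 0 + x 1) / 2 - s ^ 2 / 4) * hs

theorem isSumSq_C_mul_sq {σ : Type*} {c : ℝ} (hc : 0 ≤ c) (p : MvPolynomial σ ℝ) :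
    IsSumSq (C c * p ^ 2) :=
  (isSumSq_algebraMap_of_nonneg hc).mul (sq p ▸ IsSumSq.mul_self p)

theorem isSumSq_quarticExample_sub {s : ℝ} (hs : s ^ 3 = 2) :
    IsSumSq (quarticExample - C (-(3 * s ^ 2 / 4))) := by
  have hs0 : 0 ≤ s := (Odd.pow_pos_iff (by decide)).mp (hs ▸ two_pos) |>.le
  rw [quarticExample_sub_eq_sum_sq hs]
  refine .add (.add (.add (.add ?_ ?_) ?_) ?_) ?_ <;> apply isSumSq_C_mul_sq <;> positivity

theorem le_eval_quarticExample {s : ℝ} (hs : s ^ 3 = 2) (x : Fin 2 → ℝ) :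
    -(3 * s ^ 2 / 4) ≤ eval x quarticExample := by
  simpa only [map_sub, eval_C, sub_nonneg] using
    ((isSumSq_quarticExample_sub hs).map (eval x)).nonneg

theorem eval_quarticExample_diag {s : ℝ} (hs : s ^ 3 = 2) :
    eval (fun _ => -(s ^ 2 / 2)) quarticExample = -(3 * s ^ 2 / 4) := by
  simp only [quarticExample, map_add, map_sub, map_mul, map_pow, eval_X]
  linear_combination (s ^ 2 / 16) * (s ^ 3 + 2) * hs

/-- For `f(X,Y) = X^4 + Y^4 − X^2Y^2 + X + Y`, the global minimum of `f` on `ℝ²`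
equals `−3/2^{4/3}` (it is a lower bound and is attained), and
`f − (−3/2^{4/3})` is a sum of squares; in particular `f_* = f_sos = −3·2^{−4/3}`. -/
theorem example_min_and_sos :
    (∀ x : Fin 2 → ℝ,
      -(3 / (2 : ℝ) ^ ((4 : ℝ) / 3)) ≤
        eval x (X 0 ^ 4 + X 1 ^ 4 - X 0 ^ 2 * X 1 ^ 2 + X 0 + X 1 :
          MvPolynomial (Fin 2) ℝ))
    ∧ (∃ x : Fin 2 → ℝ,
      eval x (X 0 ^ 4 + X 1 ^ 4 - X 0 ^ 2 * X 1 ^ 2 + X 0 + X 1 :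
          MvPolynomial (Fin 2) ℝ) = -(3 / (2 : ℝ) ^ ((4 : ℝ) / 3)))
    ∧ IsSumSq ((X 0 ^ 4 + X 1 ^ 4 - X 0 ^ 2 * X 1 ^ 2 + X 0 + X 1 :
          MvPolynomial (Fin 2) ℝ) - C (-(3 / (2 : ℝ) ^ ((4 : ℝ) / 3)))) := by
  rw [three_div_two_rpow_four_thirds]
  have hs := two_rpow_one_third_pow_three
  exact ⟨le_eval_quarticExample hs, ⟨_, eval_quarticExample_diag hs⟩,
    isSumSq_quarticExample_sub hs⟩
end
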